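/- arXiv:2604.00765 — 2 statements merged into one kernel-verified Lean document; each statement's English description precedes it below -/
import Mathlib

section
/- Let G be a second countable unimodular amenable locally compact group with Haar measure μ_G and strong Følner sequence (K_n), and let H ≤ G be a closed subgroup such that the quotient space G/H is noncompact. Then every discrete subset Γ ⊆ H has lower Beurling density D⁻(Γ) = 0. -/
open MeasureTheory Filter Topology Pointwise
open scoped ENNReal ComplexInnerProductSpace

noncomputable section

/-- A (right) strong Følner sequence in a locally compact group `G` with Haar measure `μ`:
a sequence of compact sets of positive measure such that
`μ(KₙK ∩ Kₙᶜ K)/μ(Kₙ) → 0` for every compact `K ⊆ G`. -/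
def IsStrongFolnerSequence {G : Type*} [Group G] [TopologicalSpace G] [MeasurableSpace G]
    (μ : Measure G) (K : ℕ → Set G) : Prop :=
  (∀ n, IsCompact (K n) ∧ μ (K n) ≠ 0) ∧
    ∀ C : Set G, IsCompact C →
      Tendsto (fun n => μ ((K n * C) ∩ ((K n)ᶜ * C)) / μ (K n)) atTop (𝓝 0)

/-- The lower Beurling density of a set `Γ ⊆ G`, computed with respect to a
strong Følner sequence `K`:  `D⁻(Γ) = liminf_n inf_x #(Γ ∩ xKₙ)/μ(Kₙ)`. -/
def lowerBeurlingDensity {G : Type*} [Group G] [TopologicalSpace G] [MeasurableSpace G]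
    (μ : Measure G) (K : ℕ → Set G) (Γ : Set G) : ℝ≥0∞ :=
  Filter.liminf (fun n => ⨅ x : G, Measure.count (Γ ∩ x • K n) / μ (K n)) atTop


/-- Any discrete subset of a closed subgroup `H ≤ G` with noncompact quotient `G/H`
has lower Beurling density zero. -/
theorem lowerBeurlingDensity_eq_zero_of_subset_subgroup
    {G : Type*} [Group G] [TopologicalSpace G] [IsTopologicalGroup G]
    [LocallyCompactSpace G] [SecondCountableTopology G]
    [MeasurableSpace G] [BorelSpace G]
    (μ : Measure G) [μ.IsHaarMeasure] [μ.IsMulRightInvariant]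
    (K : ℕ → Set G) (hK : IsStrongFolnerSequence μ K)
    (H : Subgroup G) (hH_closed : IsClosed (H : Set G))
    (hH_noncompact : ¬ CompactSpace (G ⧸ H))
    (Γ : Set G) (hΓH : Γ ⊆ (H : Set G)) (hΓ : DiscreteTopology Γ) :
    lowerBeurlingDensity μ K Γ = 0 := by
  have key : ∀ n, ∃ x : G, Γ ∩ x • K n = ∅ := by
    intro n
    by_contra h
    push_neg at h
    apply hH_noncompact
    have hKc : IsCompact (K n) := (hK.1 n).1
    have himg : IsCompact (QuotientGroup.mk '' K n : Set (G ⧸ H)) :=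
      hKc.image continuous_quotient_mk'
    have huniv : (Set.univ : Set (G ⧸ H)) ⊆ QuotientGroup.mk '' K n := by
      rintro q -
      obtain ⟨g, rfl⟩ := QuotientGroup.mk_surjective q
      obtain ⟨y, hyΓ, hyK⟩ := h g⁻¹
      obtain ⟨k, hk, hky⟩ := hyK
      refine ⟨k, hk, ?_⟩
      -- y ∈ H and y = g⁻¹ * k, so k = g * y, hence mk k = mk g
      have hyH : y ∈ H := hΓH hyΓ
      have : k = g * y := by
        have : g⁻¹ * k = y := hky
        rw [← this]; group
      rw [this]
      exact (QuotientGroup.mk_mul_of_mem g hyH)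
    exact ⟨Set.univ_subset_iff.1 huniv ▸ himg⟩
  have hzero : ∀ n, (⨅ x : G, Measure.count (Γ ∩ x • K n) / μ (K n)) = 0 := by
    intro n
    obtain ⟨x, hx⟩ := key n
    refine le_antisymm (iInf_le_of_le x ?_) zero_le
    simp [hx]
  unfold lowerBeurlingDensity
  simp only [hzero]
  exact liminf_const 0
end
end

section
/- Let ℋ and 𝒦 be complex Hilbert spaces, C : ℋ → 𝒦 a linear isometry, Λ an index set, and for each λ ∈ Λ let π(λ) be a unitary operator on ℋ and U(λ) a unitary operator on 𝒦 such that C π(λ) = U(λ) C. Let P := C C* be the orthogonal projection of 𝒦 onto the range of C. If F₀ ∈ 𝒦 is such that (U(λ)F₀)_{λ∈Λ} is a frame for 𝒦 with bounds A, B, then the orthogonal projection P commutes with every U(λ), and (π(λ) C* P F₀)_{λ∈Λ} is a frame for ℋ with the same bounds A, B. -/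
open scoped ComplexInnerProductSpace

noncomputable section

/-- Frames transfer along intertwining isometries: if `C : ℋ → 𝒦` is an isometry
intertwining unitaries `π(λ)` on `ℋ` with unitaries `U(λ)` on `𝒦`, `P = CC*`, and
`(U(λ)F₀)_λ` is a frame for `𝒦` with bounds `A, B`, then `P` commutes with every `U(λ)` and
`(π(λ)C*PF₀)_λ` is a frame for `ℋ` with the same bounds. -/
theorem frame_transfer_along_isometry
    {H : Type*} [NormedAddCommGroup H] [InnerProductSpace ℂ H] [CompleteSpace H]
    {K : Type*} [NormedAddCommGroup K] [InnerProductSpace ℂ K] [CompleteSpace K]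
    (C : H →ₗᵢ[ℂ] K)
    {Λ : Type*} (π : Λ → (H →L[ℂ] H)) (U : Λ → (K →L[ℂ] K))
    (hπ_unitary : ∀ l, π l ∈ unitary (H →L[ℂ] H))
    (hU_unitary : ∀ l, U l ∈ unitary (K →L[ℂ] K))
    (h_intertwine : ∀ l,
      (C.toContinuousLinearMap).comp (π l) = (U l).comp C.toContinuousLinearMap)
    (F₀ : K) (A B : ℝ) (hA : 0 < A) (hAB : A ≤ B)
    (h_frame : ∀ g : K,
      A * ‖g‖ ^ 2 ≤ ∑' l : Λ, ‖⟪g, U l F₀⟫‖ ^ 2 ∧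
        ∑' l : Λ, ‖⟪g, U l F₀⟫‖ ^ 2 ≤ B * ‖g‖ ^ 2) :
    (∀ l, (C.toContinuousLinearMap.comp
        (ContinuousLinearMap.adjoint C.toContinuousLinearMap)).comp (U l)
      = (U l).comp (C.toContinuousLinearMap.comp
          (ContinuousLinearMap.adjoint C.toContinuousLinearMap))) ∧
      ∀ f : H,
        A * ‖f‖ ^ 2 ≤ ∑' l : Λ, ‖⟪f, π l (ContinuousLinearMap.adjoint C.toContinuousLinearMap
            ((C.toContinuousLinearMap.comp
              (ContinuousLinearMap.adjoint C.toContinuousLinearMap)) F₀))⟫‖ ^ 2 ∧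
          ∑' l : Λ, ‖⟪f, π l (ContinuousLinearMap.adjoint C.toContinuousLinearMap
            ((C.toContinuousLinearMap.comp
              (ContinuousLinearMap.adjoint C.toContinuousLinearMap)) F₀))⟫‖ ^ 2
            ≤ B * ‖f‖ ^ 2 := by
  set Ct := C.toContinuousLinearMap with hCtdef
  set Cs := ContinuousLinearMap.adjoint C.toContinuousLinearMap with hCsdef
  -- C* C = id
  have h1 : ∀ x : H, Cs (Ct x) = x := by
    intro x
    apply ext_inner_right ℂ
    intro y
    rw [hCsdef, ContinuousLinearMap.adjoint_inner_left]
    exact C.inner_map_map x y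
  -- unitary identities, pointwise
  have hU1 : ∀ l (g : K), ContinuousLinearMap.adjoint (U l) (U l g) = g := by
    intro l g
    have := congrFun (congrArg DFunLike.coe (hU_unitary l).1) g
    simpa [ContinuousLinearMap.mul_apply, ContinuousLinearMap.star_eq_adjoint] using this
  have hπ2 : ∀ l (x : H), π l (ContinuousLinearMap.adjoint (π l) x) = x := by
    intro l x
    have := congrFun (congrArg DFunLike.coe (hπ_unitary l).2) x
    simpa [ContinuousLinearMap.mul_apply, ContinuousLinearMap.star_eq_adjoint] using this
  -- adjoint of the intertwining relation: (π l)* ∘ C* = C* ∘ (U l)*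
  have hadj : ∀ l (g : K),
      ContinuousLinearMap.adjoint (π l) (Cs g) = Cs (ContinuousLinearMap.adjoint (U l) g) := by
    intro l g
    have h := congrArg ContinuousLinearMap.adjoint (h_intertwine l)
    rw [ContinuousLinearMap.adjoint_comp, ContinuousLinearMap.adjoint_comp] at h
    exact congrFun (congrArg DFunLike.coe h) g
  -- key relation: C* U l = π l C*
  have h2 : ∀ l (g : K), Cs (U l g) = π l (Cs g) := by
    intro l g
    have e1 : ContinuousLinearMap.adjoint (π l) (Cs (U l g)) = Cs g := by
      rw [hadj l (U l g), hU1 l g]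
    calc Cs (U l g) = π l (ContinuousLinearMap.adjoint (π l) (Cs (U l g))) := (hπ2 l _).symm
      _ = π l (Cs g) := by rw [e1]
  constructor
  · intro l
    ext g
    simp only [ContinuousLinearMap.comp_apply]
    rw [h2 l g]
    exact congrFun (congrArg DFunLike.coe (h_intertwine l)) (Cs g)
  · intro f
    have hvec : ∀ l, π l (Cs ((Ct.comp Cs) F₀)) = π l (Cs F₀) := by
      intro l
      rw [ContinuousLinearMap.comp_apply, h1]
    have hinner : ∀ l, ⟪f, π l (Cs F₀)⟫ = ⟪Ct f, U l F₀⟫ := by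
      intro l
      rw [← h2 l F₀, hCsdef, ContinuousLinearMap.adjoint_inner_right]
    have hsum : (∑' l : Λ, ‖⟪f, π l (Cs ((Ct.comp Cs) F₀))⟫‖ ^ 2)
        = ∑' l : Λ, ‖⟪Ct f, U l F₀⟫‖ ^ 2 := by
      congr 1
      funext l
      rw [hvec l, hinner l]
    have hnorm : ‖f‖ = ‖Ct f‖ := (C.norm_map f).symm
    rw [hsum, hnorm]
    exact h_frame (Ct f)
end
end
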